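/- Conservation for the second-order (two-stage Runge–Kutta) fully discrete DG scheme: let (C_n^m), (E^m), (Φ^m) in V_h^k satisfy, for every m ≥ 0, the two-stage scheme: Stage 1 (half step): for n ≠ 2, (2/Δt)∫_{I_j}(C_n^{(1)} − C_n^m)φ dx + a_n^j(g_n^m, φ) + b_n^j(C^m, E^m, Φ^m, φ) = 0 for all cells and test polynomials; (E^{(1)}, Φ^{(1)}) solves the DG Poisson scheme with source C_0^{(1)}; and with E^{m+1/4} = (E^m + E^{(1)})/2, Φ^{m+1/4} = (Φ^m + Φ^{(1)})/2, (2/Δt)∫_{I_j}(C_2^{(1)} − C_2^m)φ dx + a_2^j(g_2^m, φ) + b_2^j(C^m, E^{m+1/4}, Φ^{m+1/4}, φ) = 0. Stage 2 (full step): for n ≠ 2, (1/Δt)∫_{I_j}(C_n^{m+1} − C_n^m)φ dx + a_n^j(g_n^{(1)}, φ) + b_n^j(C^{(1)}, E^{(1)}, Φ^{(1)}, φ) = 0; (E^{m+1}, Φ^{m+1}) solves the DG Poisson scheme with source C_0^{m+1} (and (E^m, Φ^m) with source C_0^m); and with E^{m+1/2} = (E^m + E^{m+1})/2, Φ^{m+1/2}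 = (Φ^m + Φ^{m+1})/2, (1/Δt)∫_{I_j}(C_2^{m+1} − C_2^m)φ dx + a_2^j(g_2^{(1)}, φ) + b_2^j(C^{(1)}, E^{m+1/2}, Φ^{m+1/2}, φ) = 0. Then for every m ≥ 0: ∫_0^L C_0^m dx = ∫_0^L C_0^0 dx, ∫_0^L C_1^m dx = ∫_0^L C_1^0 dx, and ℰ_h^m := (1/2)∫_0^L [ v_th³ (√2 C_2^m + C_0^m) + (E^m)² ] dx + (β/2) Σ_j ([Φ^m]_{j−1/2})² satisfies ℰ_h^m = ℰ_h^0. -/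

import Mathlib

open MeasureTheory Finset

noncomputable section

/-- Left (minus) one-sided limit of the piecewise polynomial with cell
polynomials `u 0, …, u (Nx−1)` at the interface `x_{i+1/2} = X i`
(interfaces `i = 0` and `i = Nx` are identified periodically). -/
def dgMinus (Nx : ℕ) (X : ℕ → ℝ) (u : ℕ → Polynomial ℝ) (i : ℕ) : ℝ :=
  if i = 0 then (u (Nx - 1)).eval (X Nx) else (u (i - 1)).eval (X i)

/-- Right (plus) one-sided limit at the interface `X i` (periodic). -/
def dgPlus (Nx : ℕ) (X : ℕ → ℝ) (u : ℕ → Polynomial ℝ) (i : ℕ) : ℝ :=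
  if i = Nx then (u 0).eval (X 0) else (u i).eval (X i)

/-- Jump `[u] = u⁺ − u⁻` at the interface `X i`. -/
def dgJump (Nx : ℕ) (X : ℕ → ℝ) (u : ℕ → Polynomial ℝ) (i : ℕ) : ℝ :=
  dgPlus Nx X u i - dgMinus Nx X u i

/-- Average `{u} = (u⁺ + u⁻)/2` at the interface `X i`. -/
def dgAvg (Nx : ℕ) (X : ℕ → ℝ) (u : ℕ → Polynomial ℝ) (i : ℕ) : ℝ :=
  (dgPlus Nx X u i + dgMinus Nx X u i) / 2

/-- Integral over the cell `I_j = (X j, X (j+1))`. -/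
def cellInt (X : ℕ → ℝ) (j : ℕ) (f : ℝ → ℝ) : ℝ :=
  ∫ x in (X j)..(X (j + 1)), f x

/-- `g_n = v_th (√(n+1) C_{n+1} + √n C_{n−1})` on each cell (the convention
`C_{−1} = 0` is handled by `√0 = 0` and truncated subtraction). -/
def dgG (vth : ℝ) (Cf : ℕ → ℕ → Polynomial ℝ) (n j : ℕ) : Polynomial ℝ :=
  vth • (Real.sqrt (n + 1) • Cf (n + 1) j + Real.sqrt n • Cf (n - 1) j)

/-- Global Lax–Friedrichs flux
`ĝ_n = (1/2)(g_n⁻ + g_n⁺ − α (C_n⁺ − C_n⁻))` with `α = v_th √N_H`. -/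
def dgGhat (vth : ℝ) (NH Nx : ℕ) (X : ℕ → ℝ) (Cf : ℕ → ℕ → Polynomial ℝ)
    (n i : ℕ) : ℝ :=
  (1 / 2) * (dgMinus Nx X (dgG vth Cf n) i + dgPlus Nx X (dgG vth Cf n) i
    - vth * Real.sqrt NH *
        (dgPlus Nx X (Cf n) i - dgMinus Nx X (Cf n) i))

/-- `Ĉ_1 = ĝ_0 / v_th`. -/
def dgC1hat (vth : ℝ) (NH Nx : ℕ) (X : ℕ → ℝ) (Cf : ℕ → ℕ → Polynomial ℝ)
    (i : ℕ) : ℝ :=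
  dgGhat vth NH Nx X Cf 0 i / vth

/-- The convective DG form
`a_n^j(g_n, φ) = −∫_{I_j} g_n φ' + ĝ_{n,j+1/2} φ(x_{j+1/2}⁻) − ĝ_{n,j−1/2} φ(x_{j−1/2}⁺)`. -/
def dgA (vth : ℝ) (NH Nx : ℕ) (X : ℕ → ℝ) (Cf : ℕ → ℕ → Polynomial ℝ)
    (n j : ℕ) (φ : Polynomial ℝ) : ℝ :=
  -(cellInt X j fun x => (dgG vth Cf n j).eval x * φ.derivative.eval x)
    + dgGhat vth NH Nx X Cf n (j + 1) * φ.eval (X (j + 1))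
    - dgGhat vth NH Nx X Cf n j * φ.eval (X j)

/-- The residual `⟨r_1^j, φ⟩`. -/
def dgR1 (vth β : ℝ) (Nx : ℕ) (X : ℕ → ℝ) (Ef Φf : ℕ → Polynomial ℝ)
    (j : ℕ) (φ : Polynomial ℝ) : ℝ :=
  -(β / (2 * vth ^ 2)) *
    ((dgJump Nx X Φf j * dgJump Nx X Ef j) * φ.eval (X j)
      + (dgJump Nx X Φf (j + 1) * dgJump Nx X Ef (j + 1)) * φ.eval (X (j + 1)))

/-- The residual `⟨r_2^j, φ⟩`. -/
def dgR2 (vth : ℝ) (NH Nx : ℕ) (X : ℕ → ℝ) (Cf : ℕ → ℕ → Polynomial ℝ)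
    (Φf : ℕ → Polynomial ℝ) (j : ℕ) (φ : Polynomial ℝ) : ℝ :=
  (1 / (Real.sqrt 2 * vth)) *
    ((dgAvg Nx X (Cf 1) j - dgC1hat vth NH Nx X Cf j) * dgJump Nx X Φf j *
        φ.eval (X j)
      + (dgAvg Nx X (Cf 1) (j + 1) - dgC1hat vth NH Nx X Cf (j + 1)) *
          dgJump Nx X Φf (j + 1) * φ.eval (X (j + 1)))

/-- The residual `⟨r_n^j, φ⟩` (zero for `n ∉ {1, 2}`). -/
def dgR (vth β : ℝ) (NH Nx : ℕ) (X : ℕ → ℝ) (Cf : ℕ → ℕ → Polynomial ℝ)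
    (Ef Φf : ℕ → Polynomial ℝ) (n j : ℕ) (φ : Polynomial ℝ) : ℝ :=
  if n = 1 then dgR1 vth β Nx X Ef Φf j φ
  else if n = 2 then dgR2 vth NH Nx X Cf Φf j φ
  else 0

/-- The source form `b_n^j(C, E, Φ, φ) = −(√n/v_th) ∫_{I_j} E C_{n−1} φ − ⟨r_n^j, φ⟩`
(for `n = 0` this is `0` since `√0 = 0` and `r_0 = 0`). -/
def dgB (vth β : ℝ) (NH Nx : ℕ) (X : ℕ → ℝ) (Cf : ℕ → ℕ → Polynomial ℝ)
    (Ef Φf : ℕ → Polynomial ℝ) (n j : ℕ) (φ : Polynomial ℝ) : ℝ :=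
  -(Real.sqrt n / vth) *
      (cellInt X j fun x => (Ef j).eval x * (Cf (n - 1) j).eval x * φ.eval x)
    - dgR vth β NH Nx X Cf Ef Φf n j φ

/-- The local DG scheme for the Poisson equation with source `C_0`, with
fluxes `Φ̂ = {Φ}` and `Ê = {E} − β [Φ]`. -/
def dgPoisson (vth ρ0 β : ℝ) (k Nx : ℕ) (X : ℕ → ℝ)
    (C0f Ef Φf : ℕ → Polynomial ℝ) : Prop :=
  ∀ j < Nx, ∀ ψ : Polynomial ℝ, ψ.natDegree ≤ k →
    ((cellInt X j fun x => (Φf j).eval x * ψ.derivative.eval x)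
        - dgAvg Nx X Φf (j + 1) * ψ.eval (X (j + 1))
        + dgAvg Nx X Φf j * ψ.eval (X j)
      = cellInt X j fun x => (Ef j).eval x * ψ.eval x)
    ∧ (-(cellInt X j fun x => (Ef j).eval x * ψ.derivative.eval x)
        + (dgAvg Nx X Ef (j + 1) - β * dgJump Nx X Φf (j + 1)) *
            ψ.eval (X (j + 1))
        - (dgAvg Nx X Ef j - β * dgJump Nx X Φf j) * ψ.eval (X j)
      = cellInt X j fun x => (vth * (C0f j).eval x - ρ0) * ψ.eval x)

/-- `∫_0^L u dx` for a piecewise polynomial `u`. -/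
def dgTotInt (Nx : ℕ) (X : ℕ → ℝ) (u : ℕ → Polynomial ℝ) : ℝ :=
  ∑ j ∈ Finset.range Nx, cellInt X j fun x => (u j).eval x

/-- The discrete total energy
`ℰ_h = (1/2) ∫_0^L [v_th³(√2 C_2 + C_0) + E²] dx + (β/2) Σ_j [Φ]_{j−1/2}²`. -/
def dgEnergy (vth β : ℝ) (Nx : ℕ) (X : ℕ → ℝ) (Cf : ℕ → ℕ → Polynomial ℝ)
    (Ef Φf : ℕ → Polynomial ℝ) : ℝ :=
  (1 / 2) * ∑ j ∈ Finset.range Nx,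
      (cellInt X j fun x =>
        vth ^ 3 * (Real.sqrt 2 * (Cf 2 j).eval x + (Cf 0 j).eval x)
          + ((Ef j).eval x) ^ 2)
    + (β / 2) * ∑ j ∈ Finset.range Nx, (dgJump Nx X Φf j) ^ 2

end

/-!
A full Runge–Kutta step is a forward-Euler step of every mode with the right-hand side
evaluated at the stage values, so it suffices that such a step conserves the three quantities,
whatever the stage values are. Summed over the cells, the scheme becomes a set of identities
between the broken pairing `⟨u, w⟩ = Σ_j ∫_{I_j} u w` and interface sums `Σ_i F_i [w]_i`, in
which the numerical fluxes telescope by periodicity. This gives mass conservation (test the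
`C_0` equation with `1`). For momentum, test the `C_1` equation with `1`: testing the Poisson
scheme with `1` and with `E` gives the discrete Gauss law `v_th ⟨C_0, E⟩ = β Σ [Φ][E]`, which is
exactly what the residual `r_1` cancels. For energy, test the `C_0` update with `Φ^m + Φ^{m+1}`;
the Poisson schemes at the two time levels turn this into the change of `‖E‖² + β Σ [Φ]²`. The
`C_2` update tested with `1` produces the same quantity
`⟨E^m + E^{m+1}, C_1^{(1)}⟩ + Σ ({C_1} − Ĉ_1)[Φ^m + Φ^{m+1}]` with the opposite sign, the
residual `r_2` supplying its interface part.
-/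

lemma sum_range_succ_of_periodic {n : ℕ} {G : ℕ → ℝ} (hG : G n = G 0) :
    ∑ j ∈ range n, G (j + 1) = ∑ j ∈ range n, G j := by
  have := Finset.sum_range_sub G n
  rw [sum_sub_distrib, hG, sub_self] at this
  linarith

lemma sum_add_succ_of_periodic {n : ℕ} {G : ℕ → ℝ} (hG : G n = G 0) :
    ∑ j ∈ range n, (G j + G (j + 1)) = 2 * ∑ j ∈ range n, G j := by
  rw [sum_add_distrib, sum_range_succ_of_periodic hG]; ring

noncomputable section Broken

variable (X : ℕ → ℝ) (Nx : ℕ)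

def cellIntegral (j : ℕ) : Polynomial ℝ →ₗ[ℝ] ℝ where
  toFun p := cellInt X j fun x => p.eval x
  map_add' p q := by
    simp only [cellInt, Polynomial.eval_add]
    exact intervalIntegral.integral_add (p.continuous.intervalIntegrable _ _)
      (q.continuous.intervalIntegrable _ _)
  map_smul' c p := by
    simp only [cellInt, Polynomial.eval_smul, smul_eq_mul, RingHom.id_apply]
    exact intervalIntegral.integral_const_mul c _

variable {X} in
lemma cellInt_eq_cellIntegral {f : ℝ → ℝ} {p : Polynomial ℝ} (h : ∀ x, f x = p.eval x)
    (j : ℕ) : cellInt X j f = cellIntegral X j p := by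
  rw [funext h]; rfl

lemma cellInt_eval_mul (j : ℕ) (p q : Polynomial ℝ) :
    (cellInt X j fun x => p.eval x * q.eval x) = cellIntegral X j (p * q) :=
  cellInt_eq_cellIntegral (fun _ => (Polynomial.eval_mul ..).symm) j

lemma cellIntegral_derivative (j : ℕ) (p : Polynomial ℝ) :
    cellIntegral X j (Polynomial.derivative p) = p.eval (X (j + 1)) - p.eval (X j) :=
  intervalIntegral.integral_eq_sub_of_hasDerivAt (fun x _ => p.hasDerivAt x)
    (p.derivative.continuous.intervalIntegrable _ _)

def brokenDeriv : (ℕ → Polynomial ℝ) →ₗ[ℝ] ℕ → Polynomial ℝ :=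
  Polynomial.derivative.compLeft ℕ

def brokenInner : (ℕ → Polynomial ℝ) →ₗ[ℝ] (ℕ → Polynomial ℝ) →ₗ[ℝ] ℝ :=
  LinearMap.mk₂ ℝ (fun u w => ∑ j ∈ range Nx, cellIntegral X j (u j * w j))
    (fun u v w => by simp [add_mul, sum_add_distrib])
    (fun c u w => by simp [mul_sum])
    (fun u v w => by simp [mul_add, sum_add_distrib])
    (fun c u w => by simp [mul_sum])

lemma brokenInner_apply (u w : ℕ → Polynomial ℝ) :
    brokenInner X Nx u w = ∑ j ∈ range Nx, cellIntegral X j (u j * w j) := rfl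

lemma brokenInner_comm (u w : ℕ → Polynomial ℝ) :
    brokenInner X Nx u w = brokenInner X Nx w u := by
  simp only [brokenInner_apply, mul_comm]

lemma brokenInner_one (u : ℕ → Polynomial ℝ) : brokenInner X Nx u 1 = dgTotInt Nx X u := by
  simp only [brokenInner_apply, Pi.one_apply, mul_one]; rfl

lemma dgTotInt_eq_sum_cellIntegral (u : ℕ → Polynomial ℝ) :
    dgTotInt Nx X u = ∑ j ∈ range Nx, cellIntegral X j (u j) := rfl

variable {X Nx}

section Traces

variable (u w : ℕ → Polynomial ℝ) (i : ℕ)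

lemma dgMinus_add : dgMinus Nx X (u + w) i = dgMinus Nx X u i + dgMinus Nx X w i := by
  unfold dgMinus; split_ifs <;> simp

lemma dgMinus_sub : dgMinus Nx X (u - w) i = dgMinus Nx X u i - dgMinus Nx X w i := by
  unfold dgMinus; split_ifs <;> simp

lemma dgMinus_smul (c : ℝ) : dgMinus Nx X (c • u) i = c * dgMinus Nx X u i := by
  unfold dgMinus; split_ifs <;> simp

lemma dgMinus_mul : dgMinus Nx X (u * w) i = dgMinus Nx X u i * dgMinus Nx X w i := by
  unfold dgMinus; split_ifs <;> simp

lemma dgMinus_one : dgMinus Nx X 1 i = 1 := by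
  unfold dgMinus; split_ifs <;> simp

lemma dgPlus_add : dgPlus Nx X (u + w) i = dgPlus Nx X u i + dgPlus Nx X w i := by
  unfold dgPlus; split_ifs <;> simp

lemma dgPlus_sub : dgPlus Nx X (u - w) i = dgPlus Nx X u i - dgPlus Nx X w i := by
  unfold dgPlus; split_ifs <;> simp

lemma dgPlus_smul (c : ℝ) : dgPlus Nx X (c • u) i = c * dgPlus Nx X u i := by
  unfold dgPlus; split_ifs <;> simp

lemma dgPlus_mul : dgPlus Nx X (u * w) i = dgPlus Nx X u i * dgPlus Nx X w i := by
  unfold dgPlus; split_ifs <;> simp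

lemma dgPlus_one : dgPlus Nx X 1 i = 1 := by
  unfold dgPlus; split_ifs <;> simp

lemma dgAvg_add : dgAvg Nx X (u + w) = dgAvg Nx X u + dgAvg Nx X w := by
  ext i; simp only [dgAvg, dgMinus_add, dgPlus_add, Pi.add_apply]; ring

lemma dgAvg_sub : dgAvg Nx X (u - w) = dgAvg Nx X u - dgAvg Nx X w := by
  ext i; simp only [dgAvg, dgMinus_sub, dgPlus_sub, Pi.sub_apply]; ring

lemma dgJump_add : dgJump Nx X (u + w) = dgJump Nx X u + dgJump Nx X w := by
  ext i; simp only [dgJump, dgMinus_add, dgPlus_add, Pi.add_apply]; ring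

lemma dgJump_smul (c : ℝ) : dgJump Nx X (c • u) = c • dgJump Nx X u := by
  ext i; simp only [dgJump, dgMinus_smul, dgPlus_smul, Pi.smul_apply, smul_eq_mul]; ring

lemma dgJump_one : dgJump Nx X 1 = 0 := by
  ext i; simp only [dgJump, dgMinus_one, dgPlus_one, sub_self, Pi.zero_apply]

lemma dgJump_mul :
    dgJump Nx X (u * w) i
      = dgAvg Nx X u i * dgJump Nx X w i + dgAvg Nx X w i * dgJump Nx X u i := by
  simp only [dgJump, dgAvg, dgMinus_mul, dgPlus_mul]; ring

lemma eval_succ_eq_dgMinus (j : ℕ) : (u j).eval (X (j + 1)) = dgMinus Nx X u (j + 1) := by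
  simp [dgMinus]

lemma eval_eq_dgPlus {j : ℕ} (hj : j < Nx) : (u j).eval (X j) = dgPlus Nx X u j := by
  simp [dgPlus, hj.ne]

lemma dgPlus_periodic : dgPlus Nx X u Nx = dgPlus Nx X u 0 := by
  simp [dgPlus]

lemma dgMinus_periodic (hNx : 1 ≤ Nx) : dgMinus Nx X u Nx = dgMinus Nx X u 0 := by
  simp [dgMinus, show Nx ≠ 0 by omega]

lemma dgAvg_periodic (hNx : 1 ≤ Nx) : dgAvg Nx X u Nx = dgAvg Nx X u 0 := by
  simp only [dgAvg, dgMinus_periodic u hNx, dgPlus_periodic u]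

lemma dgJump_periodic (hNx : 1 ≤ Nx) : dgJump Nx X u Nx = dgJump Nx X u 0 := by
  simp only [dgJump, dgMinus_periodic u hNx, dgPlus_periodic u]

lemma dgGhat_periodic (hNx : 1 ≤ Nx) (vth : ℝ) (NH : ℕ) (Cf : ℕ → ℕ → Polynomial ℝ)
    (n : ℕ) :
    dgGhat vth NH Nx X Cf n Nx = dgGhat vth NH Nx X Cf n 0 := by
  simp only [dgGhat, dgMinus_periodic _ hNx, dgPlus_periodic _]

lemma dgC1hat_periodic (hNx : 1 ≤ Nx) (vth : ℝ) (NH : ℕ)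
    (Cf : ℕ → ℕ → Polynomial ℝ) :
    dgC1hat vth NH Nx X Cf Nx = dgC1hat vth NH Nx X Cf 0 := by
  simp only [dgC1hat, dgGhat_periodic hNx]

end Traces

variable (X Nx) in
def jumpPairing : (ℕ → ℝ) →ₗ[ℝ] (ℕ → Polynomial ℝ) →ₗ[ℝ] ℝ :=
  LinearMap.mk₂ ℝ (fun F w => ∑ i ∈ range Nx, F i * dgJump Nx X w i)
    (fun F G w => by simp [add_mul, sum_add_distrib])
    (fun c F w => by simp [mul_sum, mul_assoc])
    (fun F u w => by simp [dgJump_add, mul_add, sum_add_distrib])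
    (fun c F w => by simp [dgJump_smul, mul_sum, mul_left_comm])

lemma jumpPairing_apply (F : ℕ → ℝ) (w : ℕ → Polynomial ℝ) :
    jumpPairing X Nx F w = ∑ i ∈ range Nx, F i * dgJump Nx X w i := rfl

lemma jumpPairing_one (F : ℕ → ℝ) : jumpPairing X Nx F 1 = 0 := by
  simp [jumpPairing_apply, dgJump_one]

lemma jumpPairing_dgJump_comm (u w : ℕ → Polynomial ℝ) :
    jumpPairing X Nx (dgJump Nx X u) w = jumpPairing X Nx (dgJump Nx X w) u := by
  simp only [jumpPairing_apply, mul_comm]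

lemma brokenDeriv_apply (u : ℕ → Polynomial ℝ) (j : ℕ) :
    brokenDeriv u j = Polynomial.derivative (u j) := rfl

lemma brokenDeriv_one : brokenDeriv (1 : ℕ → Polynomial ℝ) = 0 := by
  ext1 j; simp [brokenDeriv_apply]

lemma sum_flux_eq_neg_jumpPairing (hNx : 1 ≤ Nx) {F : ℕ → ℝ} (hF : F Nx = F 0)
    (φ : ℕ → Polynomial ℝ) :
    ∑ j ∈ range Nx, (F (j + 1) * (φ j).eval (X (j + 1)) - F j * (φ j).eval (X j))
      = -jumpPairing X Nx F φ := by
  have hshift := sum_range_succ_of_periodic (G := fun i => F i * dgMinus Nx X φ i)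
    (by rw [hF, dgMinus_periodic φ hNx])
  calc _ = ∑ j ∈ range Nx, (F (j + 1) * dgMinus Nx X φ (j + 1) - F j * dgPlus Nx X φ j) :=
        sum_congr rfl fun j hj => by
          rw [eval_succ_eq_dgMinus, eval_eq_dgPlus φ (mem_range.1 hj)]
    _ = ∑ j ∈ range Nx, (F j * dgMinus Nx X φ j - F j * dgPlus Nx X φ j) := by
        rw [sum_sub_distrib, sum_sub_distrib, hshift]
    _ = _ := by
        rw [jumpPairing_apply, ← sum_neg_distrib]
        exact sum_congr rfl fun j _ => by rw [dgJump]; ring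

lemma brokenInner_brokenDeriv_add (hNx : 1 ≤ Nx) (u w : ℕ → Polynomial ℝ) :
    brokenInner X Nx u (brokenDeriv w) + brokenInner X Nx (brokenDeriv u) w
      = -(jumpPairing X Nx (dgAvg Nx X u) w + jumpPairing X Nx (dgAvg Nx X w) u) := by
  have hcell : ∀ j, cellIntegral X j (u j * (w j).derivative)
      + cellIntegral X j ((u j).derivative * w j)
      = (1 : ℕ → ℝ) (j + 1) * ((u * w) j).eval (X (j + 1))
        - (1 : ℕ → ℝ) j * ((u * w) j).eval (X j) := by
    intro j
    rw [← map_add, Pi.one_apply, Pi.one_apply, one_mul, one_mul, ← cellIntegral_derivative,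
      Pi.mul_apply, Polynomial.derivative_mul, add_comm]
  rw [brokenInner_apply, brokenInner_apply, ← sum_add_distrib]
  simp only [brokenDeriv_apply]
  rw [sum_congr rfl fun j _ => hcell j, sum_flux_eq_neg_jumpPairing hNx rfl, jumpPairing_apply,
    jumpPairing_apply, jumpPairing_apply, ← sum_add_distrib]
  simp only [dgJump_mul, Pi.one_apply, one_mul]

end Broken

section Poisson

variable {vth ρ0 β : ℝ} {k Nx : ℕ} {X : ℕ → ℝ} {C0 E Φ : ℕ → Polynomial ℝ}

theorem dgPoisson.gradient (hP : dgPoisson vth ρ0 β k Nx X C0 E Φ) (hNx : 1 ≤ Nx)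
    {ψ : ℕ → Polynomial ℝ} (hψ : ∀ j, (ψ j).natDegree ≤ k) :
    brokenInner X Nx Φ (brokenDeriv ψ) + jumpPairing X Nx (dgAvg Nx X Φ) ψ
      = brokenInner X Nx E ψ := by
  have hcell : ∀ j ∈ range Nx, cellIntegral X j (Φ j * brokenDeriv ψ j)
      - (dgAvg Nx X Φ (j + 1) * (ψ j).eval (X (j + 1)) - dgAvg Nx X Φ j * (ψ j).eval (X j))
      = cellIntegral X j (E j * ψ j) := by
    intro j hj
    have h := (hP j (mem_range.1 hj) (ψ j) (hψ j)).1
    rw [cellInt_eval_mul, cellInt_eval_mul] at h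
    rw [brokenDeriv_apply]
    linarith
  rw [brokenInner_apply, brokenInner_apply, ← sum_congr rfl hcell, sum_sub_distrib,
    sum_flux_eq_neg_jumpPairing hNx (dgAvg_periodic Φ hNx), sub_neg_eq_add]

theorem dgPoisson.divergence (hP : dgPoisson vth ρ0 β k Nx X C0 E Φ) (hNx : 1 ≤ Nx)
    {ψ : ℕ → Polynomial ℝ} (hψ : ∀ j, (ψ j).natDegree ≤ k) :
    -brokenInner X Nx E (brokenDeriv ψ)
        - jumpPairing X Nx (dgAvg Nx X E - β • dgJump Nx X Φ) ψ
      = vth * brokenInner X Nx C0 ψ - ρ0 * dgTotInt Nx X ψ := by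
  set F := dgAvg Nx X E - β • dgJump Nx X Φ
  have hF : F Nx = F 0 := by
    simp only [F, Pi.sub_apply, Pi.smul_apply, dgAvg_periodic E hNx, dgJump_periodic Φ hNx]
  have hcell : ∀ j ∈ range Nx, -cellIntegral X j (E j * brokenDeriv ψ j)
      + (F (j + 1) * (ψ j).eval (X (j + 1)) - F j * (ψ j).eval (X j))
      = vth * cellIntegral X j (C0 j * ψ j) - ρ0 * cellIntegral X j (ψ j) := by
    intro j hj
    have h := (hP j (mem_range.1 hj) (ψ j) (hψ j)).2
    rw [cellInt_eval_mul, cellInt_eq_cellIntegral (p := vth • (C0 j * ψ j) - ρ0 • ψ j)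
      (fun x => by
        simp only [Polynomial.eval_sub, Polynomial.eval_smul, Polynomial.eval_mul, smul_eq_mul]
        ring), map_sub, map_smul, map_smul] at h
    simp only [F, brokenDeriv_apply, Pi.sub_apply, Pi.smul_apply, smul_eq_mul] at h ⊢
    linarith
  rw [brokenInner_apply, brokenInner_apply, dgTotInt_eq_sum_cellIntegral, mul_sum, mul_sum,
    ← sum_sub_distrib, ← sum_congr rfl hcell, sum_add_distrib, sum_neg_distrib,
    sum_flux_eq_neg_jumpPairing hNx hF]
  ring

theorem dgPoisson.gauss_law (hP : dgPoisson vth ρ0 β k Nx X C0 E Φ) (hNx : 1 ≤ Nx)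
    (hE : ∀ j, (E j).natDegree ≤ k) :
    vth * brokenInner X Nx C0 E = β * jumpPairing X Nx (dgJump Nx X Φ) E := by
  have hcharge : 0 = dgTotInt Nx X E := by
    simpa [brokenDeriv_one, jumpPairing_one, brokenInner_one] using
      hP.gradient hNx (ψ := 1) fun _ => by simp
  have hdiv := hP.divergence hNx hE
  have hibp := brokenInner_brokenDeriv_add (X := X) hNx E E
  rw [brokenInner_comm X Nx (brokenDeriv E)] at hibp
  simp only [map_sub, map_smul, LinearMap.sub_apply, LinearMap.smul_apply, smul_eq_mul] at hdiv
  linear_combination -hdiv - hibp / 2 - ρ0 * hcharge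

theorem dgPoisson.field_energy_sub {C0' E' Φ' : ℕ → Polynomial ℝ}
    (hP : dgPoisson vth ρ0 β k Nx X C0 E Φ) (hP' : dgPoisson vth ρ0 β k Nx X C0' E' Φ')
    (hNx : 1 ≤ Nx) (hE : ∀ j, (E j).natDegree ≤ k) (hE' : ∀ j, (E' j).natDegree ≤ k)
    (hΦ : ∀ j, (Φ j).natDegree ≤ k) (hΦ' : ∀ j, (Φ' j).natDegree ≤ k) :
    brokenInner X Nx E' E' - brokenInner X Nx E E
        + β * (jumpPairing X Nx (dgJump Nx X Φ') Φ' - jumpPairing X Nx (dgJump Nx X Φ) Φ)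
      = vth * brokenInner X Nx (C0' - C0) (Φ + Φ') := by
  have hΔE : ∀ j, ((E' - E) j).natDegree ≤ k := fun j =>
    (Polynomial.natDegree_sub_le _ _).trans (max_le (hE' j) (hE j))
  have hΨ : ∀ j, ((Φ + Φ') j).natDegree ≤ k := fun j =>
    (Polynomial.natDegree_add_le _ _).trans (max_le (hΦ j) (hΦ' j))
  have hgrad := hP.gradient hNx hΔE
  have hgrad' := hP'.gradient hNx hΔE
  have hdiv := hP.divergence hNx hΨ
  have hdiv' := hP'.divergence hNx hΨ
  have hibp := brokenInner_brokenDeriv_add (X := X) hNx (Φ + Φ') (E' - E)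
  rw [brokenInner_comm X Nx (brokenDeriv _)] at hibp
  simp only [map_add, map_sub, map_smul, LinearMap.add_apply, LinearMap.sub_apply,
    LinearMap.smul_apply, smul_eq_mul, dgAvg_add, dgAvg_sub]
    at hgrad hgrad' hdiv hdiv' hibp ⊢
  linear_combination hibp - hgrad - hgrad' - hdiv + hdiv' - brokenInner_comm X Nx E E'
    - β * jumpPairing_dgJump_comm Φ' Φ

end Poisson

def DGEulerStep (vth β Δt : ℝ) (NH k Nx : ℕ) (X : ℕ → ℝ)
    (Cf : ℕ → ℕ → Polynomial ℝ) (Ef Φf : ℕ → Polynomial ℝ) (n : ℕ)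
    (Cold Cnew : ℕ → Polynomial ℝ) : Prop :=
  ∀ j < Nx, ∀ φ : Polynomial ℝ, φ.natDegree ≤ k →
    (1 / Δt) * ((cellInt X j fun x => (Cnew j).eval x * φ.eval x)
        - cellInt X j fun x => (Cold j).eval x * φ.eval x)
      + dgA vth NH Nx X Cf n j φ + dgB vth β NH Nx X Cf Ef Φf n j φ = 0

section Transport

variable {vth β Δt : ℝ} {NH k Nx : ℕ} {X : ℕ → ℝ} {Cf : ℕ → ℕ → Polynomial ℝ}
  {Ef Φf : ℕ → Polynomial ℝ} {n : ℕ} {Cold Cnew : ℕ → Polynomial ℝ}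

theorem DGEulerStep.brokenInner_sub (h : DGEulerStep vth β Δt NH k Nx X Cf Ef Φf n Cold Cnew)
    (hΔt : Δt ≠ 0) (hNx : 1 ≤ Nx) {φ : ℕ → Polynomial ℝ}
    (hφ : ∀ j, (φ j).natDegree ≤ k) :
    brokenInner X Nx Cnew φ - brokenInner X Nx Cold φ
      = Δt * (brokenInner X Nx (dgG vth Cf n) (brokenDeriv φ)
          + jumpPairing X Nx (dgGhat vth NH Nx X Cf n) φ
          - ∑ j ∈ range Nx, dgB vth β NH Nx X Cf Ef Φf n j (φ j)) := by
  set F := dgGhat vth NH Nx X Cf n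
  have hcell : ∀ j ∈ range Nx,
      cellIntegral X j (Cnew j * φ j) - cellIntegral X j (Cold j * φ j)
        = Δt * (cellIntegral X j (dgG vth Cf n j * brokenDeriv φ j)
          - (F (j + 1) * (φ j).eval (X (j + 1)) - F j * (φ j).eval (X j))
          - dgB vth β NH Nx X Cf Ef Φf n j (φ j)) := by
    intro j hj
    have hstep := h j (mem_range.1 hj) (φ j) (hφ j)
    rw [cellInt_eval_mul, cellInt_eval_mul, dgA, cellInt_eval_mul] at hstep
    field_simp at hstep
    rw [brokenDeriv_apply]
    linear_combination hstep
  rw [brokenInner_apply, brokenInner_apply, brokenInner_apply, ← sum_sub_distrib,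
    sum_congr rfl hcell, ← mul_sum, sum_sub_distrib, sum_sub_distrib,
    sum_flux_eq_neg_jumpPairing hNx (dgGhat_periodic hNx vth NH Cf n)]
  ring

theorem DGEulerStep.dgTotInt_sub (h : DGEulerStep vth β Δt NH k Nx X Cf Ef Φf n Cold Cnew)
    (hΔt : Δt ≠ 0) (hNx : 1 ≤ Nx) :
    dgTotInt Nx X Cnew - dgTotInt Nx X Cold
      = -Δt * ∑ j ∈ range Nx, dgB vth β NH Nx X Cf Ef Φf n j 1 := by
  have h1 := h.brokenInner_sub hΔt hNx (φ := 1) fun _ => by simp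
  rw [brokenInner_one, brokenInner_one, brokenDeriv_one, map_zero, jumpPairing_one] at h1
  simp only [h1, Pi.one_apply]
  ring

lemma dgB_zero (φ : Polynomial ℝ) (j : ℕ) : dgB vth β NH Nx X Cf Ef Φf 0 j φ = 0 := by
  simp [dgB, dgR]

theorem DGEulerStep.dgTotInt_eq_mode_zero
    (h : DGEulerStep vth β Δt NH k Nx X Cf Ef Φf 0 Cold Cnew)
    (hΔt : Δt ≠ 0) (hNx : 1 ≤ Nx) :
    dgTotInt Nx X Cnew = dgTotInt Nx X Cold := by
  have h1 := h.dgTotInt_sub hΔt hNx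
  simp only [dgB_zero, sum_const_zero, mul_zero] at h1
  linarith

lemma sum_dgB_one_one (hNx : 1 ≤ Nx) :
    ∑ j ∈ range Nx, dgB vth β NH Nx X Cf Ef Φf 1 j 1
      = -(1 / vth) * brokenInner X Nx Ef (Cf 0)
        + β / vth ^ 2 * jumpPairing X Nx (dgJump Nx X Φf) Ef := by
  set G := fun i => dgJump Nx X Φf i * dgJump Nx X Ef i
  have hG : G Nx = G 0 := by simp only [G, dgJump_periodic _ hNx]
  have hcell : ∀ j, dgB vth β NH Nx X Cf Ef Φf 1 j 1
      = -(1 / vth) * cellIntegral X j (Ef j * Cf 0 j) + β / (2 * vth ^ 2) * (G j + G (j + 1)) := by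
    intro j
    simp only [dgB, dgR, dgR1, if_pos, Nat.cast_one, Real.sqrt_one, Polynomial.eval_one, mul_one,
      Nat.sub_self, cellInt_eval_mul, G]
    ring
  rw [sum_congr rfl fun j _ => hcell j, sum_add_distrib, ← mul_sum, ← mul_sum,
    sum_add_succ_of_periodic hG, brokenInner_apply, jumpPairing_apply]
  simp only [G, mul_comm (dgJump Nx X Φf _)]
  field_simp

theorem DGEulerStep.dgTotInt_eq_mode_one {ρ0 : ℝ}
    (h : DGEulerStep vth β Δt NH k Nx X Cf Ef Φf 1 Cold Cnew)
    (hvth : vth ≠ 0) (hΔt : Δt ≠ 0) (hNx : 1 ≤ Nx)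
    (hP : dgPoisson vth ρ0 β k Nx X (Cf 0) Ef Φf) (hE : ∀ j, (Ef j).natDegree ≤ k) :
    dgTotInt Nx X Cnew = dgTotInt Nx X Cold := by
  have h1 := h.dgTotInt_sub hΔt hNx
  have hgauss := hP.gauss_law hNx hE
  rw [sum_dgB_one_one hNx, brokenInner_comm] at h1
  rw [← sub_eq_zero, h1]
  linear_combination (norm := skip) (Δt / vth ^ 2) * hgauss
  field_simp
  ring

end Transport

section Energy

variable {vth ρ0 β Δt : ℝ} {NH k Nx : ℕ} {X : ℕ → ℝ}
  {Cf : ℕ → ℕ → Polynomial ℝ} {Ef Φf Cold Cnew : ℕ → Polynomial ℝ}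

lemma dgG_zero : dgG vth Cf 0 = vth • Cf 1 := by
  ext1 j; simp [dgG]

lemma dgGhat_zero (hvth : vth ≠ 0) :
    dgGhat vth NH Nx X Cf 0 = vth • dgC1hat vth NH Nx X Cf := by
  ext1 i; simp [dgC1hat, mul_div_cancel₀ _ hvth]

lemma sum_dgB_two_one (hvth : vth ≠ 0) (hNx : 1 ≤ Nx) :
    ∑ j ∈ range Nx, dgB vth β NH Nx X Cf Ef Φf 2 j 1
      = -(√2 / vth) * (brokenInner X Nx Ef (Cf 1)
          + jumpPairing X Nx (dgAvg Nx X (Cf 1)) Φf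
          - jumpPairing X Nx (dgC1hat vth NH Nx X Cf) Φf) := by
  set S := fun i => (dgAvg Nx X (Cf 1) i - dgC1hat vth NH Nx X Cf i) * dgJump Nx X Φf i
  have hS : S Nx = S 0 := by
    simp only [S, dgAvg_periodic _ hNx, dgC1hat_periodic hNx, dgJump_periodic _ hNx]
  have hcell : ∀ j, dgB vth β NH Nx X Cf Ef Φf 2 j 1
      = -(√2 / vth) * cellIntegral X j (Ef j * Cf 1 j)
        - 1 / (√2 * vth) * (S j + S (j + 1)) := by
    intro j
    simp only [dgB, dgR, dgR2, if_neg (show (2 : ℕ) ≠ 1 by norm_num), if_pos, Nat.cast_ofNat,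
      Polynomial.eval_one, mul_one, Nat.reduceSub, cellInt_eval_mul, S]
  have hSsum : ∑ j ∈ range Nx, S j = jumpPairing X Nx (dgAvg Nx X (Cf 1)) Φf
      - jumpPairing X Nx (dgC1hat vth NH Nx X Cf) Φf := by
    simp only [S, sub_mul, sum_sub_distrib, jumpPairing_apply]
  rw [sum_congr rfl fun j _ => hcell j, sum_sub_distrib, ← mul_sum, ← mul_sum,
    sum_add_succ_of_periodic hS, hSsum, brokenInner_apply]
  field_simp
  simp only [Real.sq_sqrt zero_le_two]
  ring

theorem DGEulerStep.brokenInner_sub_mode_zero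
    (h : DGEulerStep vth β Δt NH k Nx X Cf Ef Φf 0 Cold Cnew)
    (hvth : vth ≠ 0) (hΔt : Δt ≠ 0) (hNx : 1 ≤ Nx)
    {C0 E Φ C0' E' Φ' : ℕ → Polynomial ℝ}
    (hP : dgPoisson vth ρ0 β k Nx X C0 E Φ) (hP' : dgPoisson vth ρ0 β k Nx X C0' E' Φ')
    (hC1 : ∀ j, (Cf 1 j).natDegree ≤ k)
    (hΦ : ∀ j, (Φ j).natDegree ≤ k) (hΦ' : ∀ j, (Φ' j).natDegree ≤ k) :
    brokenInner X Nx Cnew (Φ + Φ') - brokenInner X Nx Cold (Φ + Φ')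
      = -(Δt * vth) * (brokenInner X Nx (E + E') (Cf 1)
          + jumpPairing X Nx (dgAvg Nx X (Cf 1)) (Φ + Φ')
          - jumpPairing X Nx (dgC1hat vth NH Nx X Cf) (Φ + Φ')) := by
  have hΨ : ∀ j, ((Φ + Φ') j).natDegree ≤ k := fun j =>
    (Polynomial.natDegree_add_le _ _).trans (max_le (hΦ j) (hΦ' j))
  have hstep := h.brokenInner_sub hΔt hNx hΨ
  rw [dgG_zero, dgGhat_zero hvth] at hstep
  simp only [dgB_zero, sum_const_zero, sub_zero, map_smul, LinearMap.smul_apply,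
    smul_eq_mul] at hstep
  have hgrad := hP.gradient hNx hC1
  have hgrad' := hP'.gradient hNx hC1
  have hibp := brokenInner_brokenDeriv_add (X := X) hNx (Cf 1) (Φ + Φ')
  rw [brokenInner_comm X Nx (brokenDeriv _)] at hibp
  simp only [map_add, LinearMap.add_apply, dgAvg_add] at hgrad hgrad' hibp hstep ⊢
  linear_combination hstep + Δt * vth * (hibp - hgrad - hgrad')

lemma dgEnergy_eq (vth β : ℝ) (Nx : ℕ) (X : ℕ → ℝ) (Cf : ℕ → ℕ → Polynomial ℝ)
    (Ef Φf : ℕ → Polynomial ℝ) :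
    dgEnergy vth β Nx X Cf Ef Φf
      = 1 / 2 * (vth ^ 3 * (√2 * dgTotInt Nx X (Cf 2) + dgTotInt Nx X (Cf 0))
          + brokenInner X Nx Ef Ef)
        + β / 2 * jumpPairing X Nx (dgJump Nx X Φf) Φf := by
  have hcell : ∀ j, (cellInt X j fun x =>
      vth ^ 3 * (√2 * (Cf 2 j).eval x + (Cf 0 j).eval x) + ((Ef j).eval x) ^ 2)
      = vth ^ 3 * (√2 * cellIntegral X j (Cf 2 j) + cellIntegral X j (Cf 0 j))
        + cellIntegral X j (Ef j * Ef j) := by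
    intro j
    rw [cellInt_eq_cellIntegral (p := vth ^ 3 • (√2 • Cf 2 j + Cf 0 j) + Ef j * Ef j)
      (fun x => by
        simp only [Polynomial.eval_add, Polynomial.eval_smul, Polynomial.eval_mul, smul_eq_mul]
        ring), map_add, map_smul, map_add, map_smul, smul_eq_mul, smul_eq_mul]
  rw [dgEnergy, sum_congr rfl fun j _ => hcell j, jumpPairing_apply, brokenInner_apply,
    dgTotInt_eq_sum_cellIntegral, dgTotInt_eq_sum_cellIntegral]
  simp only [sum_add_distrib, ← mul_sum, sq]

theorem dgEnergy_eq_of_dgEulerStep (hvth : vth ≠ 0) (hΔt : Δt ≠ 0) (hNx : 1 ≤ Nx)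
    {Cs Cold Cnew : ℕ → ℕ → Polynomial ℝ} {Em Ep Φm Φp : ℕ → Polynomial ℝ}
    (h0 : DGEulerStep vth β Δt NH k Nx X Cs Ef Φf 0 (Cold 0) (Cnew 0))
    (h2 : DGEulerStep vth β Δt NH k Nx X Cs ((2⁻¹ : ℝ) • (Em + Ep))
      ((2⁻¹ : ℝ) • (Φm + Φp)) 2 (Cold 2) (Cnew 2))
    (hPm : dgPoisson vth ρ0 β k Nx X (Cold 0) Em Φm)
    (hPp : dgPoisson vth ρ0 β k Nx X (Cnew 0) Ep Φp)
    (hC1 : ∀ j, (Cs 1 j).natDegree ≤ k)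
    (hEm : ∀ j, (Em j).natDegree ≤ k) (hEp : ∀ j, (Ep j).natDegree ≤ k)
    (hΦm : ∀ j, (Φm j).natDegree ≤ k) (hΦp : ∀ j, (Φp j).natDegree ≤ k) :
    dgEnergy vth β Nx X Cnew Ep Φp = dgEnergy vth β Nx X Cold Em Φm := by
  have hC0 := h0.dgTotInt_eq_mode_zero hΔt hNx
  have hC2 := h2.dgTotInt_sub hΔt hNx
  rw [sum_dgB_two_one hvth hNx] at hC2
  have hfield := hPm.field_energy_sub hPp hNx hEm hEp hΦm hΦp
  have hC0Ψ := h0.brokenInner_sub_mode_zero hvth hΔt hNx hPm hPp hC1 hΦm hΦp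
  simp only [map_smul, map_sub, LinearMap.smul_apply, LinearMap.sub_apply, smul_eq_mul]
    at hC2 hfield
  rw [dgEnergy_eq, dgEnergy_eq]
  linear_combination (norm := skip) 1 / 2 * (vth ^ 3 * √2 * hC2 + vth ^ 3 * hC0 + hfield
    + vth * hC0Ψ)
  field_simp
  simp only [Real.sq_sqrt zero_le_two]
  ring

end Energy

theorem dg_rk2_conservation_general
    (vth ρ0 β Δt : ℝ) (k Nx NH : ℕ)
    (hvth : 0 < vth) (hΔt : 0 < Δt)
    (hNx : 1 ≤ Nx) (hNH : 3 ≤ NH)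
    -- the partition `0 = x_{1/2} < … < x_{Nx+1/2} = L`
    (X : ℕ → ℝ)
    -- the numerical solution at each time step, cell by cell, together with
    -- the intermediate stage values `C^{(1)}, E^{(1)}, Φ^{(1)}`
    (C C1s : ℕ → ℕ → ℕ → Polynomial ℝ) (E Φ E1 Φ1 : ℕ → ℕ → Polynomial ℝ)
    -- membership in `V_h^k`
    (hdegC1s : ∀ n m j, (C1s n m j).natDegree ≤ k)
    (hdegE : ∀ m j, (E m j).natDegree ≤ k)
    (hdegΦ : ∀ m j, (Φ m j).natDegree ≤ k)
    (hdegE1 : ∀ m j, (E1 m j).natDegree ≤ k)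
    -- the DG Poisson solver for the stage values, with source `C_0^{(1)}`
    (hPoisson1 : ∀ m : ℕ, dgPoisson vth ρ0 β k Nx X (C1s 0 m) (E1 m) (Φ1 m))
    -- Stage 2 (full step): for every mode `n ≠ 2`
    (hStage2 : ∀ m : ℕ, ∀ n < NH, n ≠ 2 → ∀ j < Nx,
      ∀ φ : Polynomial ℝ, φ.natDegree ≤ k →
      (1 / Δt) * ((cellInt X j fun x => (C n (m + 1) j).eval x * φ.eval x)
          - cellInt X j fun x => (C n m j).eval x * φ.eval x)
        + dgA vth NH Nx X (fun p i => C1s p m i) n j φ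
        + dgB vth β NH Nx X (fun p i => C1s p m i) (E1 m) (Φ1 m) n j φ = 0)
    -- the DG Poisson solver at every time step, with source `C_0^m`
    (hPoisson : ∀ m : ℕ, dgPoisson vth ρ0 β k Nx X (C 0 m) (E m) (Φ m))
    -- Stage 2 update of `C_2`, with `E^{m+1/2} = (E^m + E^{m+1})/2`,
    -- `Φ^{m+1/2} = (Φ^m + Φ^{m+1})/2`
    (hStage2C2 : ∀ m : ℕ, ∀ j < Nx, ∀ φ : Polynomial ℝ, φ.natDegree ≤ k →
      (1 / Δt) * ((cellInt X j fun x => (C 2 (m + 1) j).eval x * φ.eval x)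
          - cellInt X j fun x => (C 2 m j).eval x * φ.eval x)
        + dgA vth NH Nx X (fun p i => C1s p m i) 2 j φ
        + dgB vth β NH Nx X (fun p i => C1s p m i)
            (fun i => (2⁻¹ : ℝ) • (E m i + E (m + 1) i))
            (fun i => (2⁻¹ : ℝ) • (Φ m i + Φ (m + 1) i)) 2 j φ = 0) :
    ∀ m : ℕ,
      dgTotInt Nx X (C 0 m) = dgTotInt Nx X (C 0 0)
      ∧ dgTotInt Nx X (C 1 m) = dgTotInt Nx X (C 1 0)
      ∧ dgEnergy vth β Nx X (fun p i => C p m i) (E m) (Φ m)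
          = dgEnergy vth β Nx X (fun p i => C p 0 i) (E 0) (Φ 0) := by
  intro m
  induction m with
  | zero => exact ⟨rfl, rfl, rfl⟩
  | succ m ih =>
    obtain ⟨ihC0, ihC1, ihEnergy⟩ := ih
    have hstep : ∀ n < 2, DGEulerStep vth β Δt NH k Nx X (fun p i => C1s p m i) (E1 m) (Φ1 m)
        n (C n m) (C n (m + 1)) :=
      fun n hn => hStage2 m n (by omega) (by omega)
    refine ⟨?_, ?_, ?_⟩
    · rw [← ihC0]
      exact (hstep 0 two_pos).dgTotInt_eq_mode_zero hΔt.ne' hNx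
    · rw [← ihC1]
      exact (hstep 1 one_lt_two).dgTotInt_eq_mode_one hvth.ne' hΔt.ne' hNx (hPoisson1 m) (hdegE1 m)
    · rw [← ihEnergy]
      exact dgEnergy_eq_of_dgEulerStep hvth.ne' hΔt.ne' hNx (hstep 0 two_pos) (hStage2C2 m)
        (hPoisson m) (hPoisson (m + 1)) (hdegC1s 1 m) (hdegE m) (hdegE (m + 1)) (hdegΦ m)
        (hdegΦ (m + 1))

/-- Conservation of discrete mass, momentum and total energy for the
second-order (two-stage Runge–Kutta) fully discrete DG scheme. -/
theorem dg_rk2_conservation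
    (L vth ρ0 β Δt : ℝ) (k Nx NH : ℕ)
    (hL : 0 < L) (hvth : 0 < vth) (hβ : 0 < β) (hΔt : 0 < Δt)
    (hNx : 1 ≤ Nx) (hNH : 3 ≤ NH)
    -- the partition `0 = x_{1/2} < … < x_{Nx+1/2} = L`
    (X : ℕ → ℝ) (hX0 : X 0 = 0) (hXL : X Nx = L)
    (hXmono : ∀ j < Nx, X j < X (j + 1))
    -- the numerical solution at each time step, cell by cell, together with
    -- the intermediate stage values `C^{(1)}, E^{(1)}, Φ^{(1)}`
    (C C1s : ℕ → ℕ → ℕ → Polynomial ℝ) (E Φ E1 Φ1 : ℕ → ℕ → Polynomial ℝ)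
    -- membership in `V_h^k`
    (hdegC : ∀ n m j, (C n m j).natDegree ≤ k)
    (hdegC1s : ∀ n m j, (C1s n m j).natDegree ≤ k)
    (hdegE : ∀ m j, (E m j).natDegree ≤ k)
    (hdegΦ : ∀ m j, (Φ m j).natDegree ≤ k)
    (hdegE1 : ∀ m j, (E1 m j).natDegree ≤ k)
    (hdegΦ1 : ∀ m j, (Φ1 m j).natDegree ≤ k)
    -- truncation convention `C_{N_H} = 0` (and beyond)
    (hCtop : ∀ n, NH ≤ n → ∀ m j, C n m j = 0)
    (hC1sTop : ∀ n, NH ≤ n → ∀ m j, C1s n m j = 0)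
    -- Stage 1 (half step): Euler step for every mode `n ≠ 2`
    (hStage1 : ∀ m : ℕ, ∀ n < NH, n ≠ 2 → ∀ j < Nx,
      ∀ φ : Polynomial ℝ, φ.natDegree ≤ k →
      (2 / Δt) * ((cellInt X j fun x => (C1s n m j).eval x * φ.eval x)
          - cellInt X j fun x => (C n m j).eval x * φ.eval x)
        + dgA vth NH Nx X (fun p i => C p m i) n j φ
        + dgB vth β NH Nx X (fun p i => C p m i) (E m) (Φ m) n j φ = 0)
    -- the DG Poisson solver for the stage values, with source `C_0^{(1)}`
    (hPoisson1 : ∀ m : ℕ, dgPoisson vth ρ0 β k Nx X (C1s 0 m) (E1 m) (Φ1 m))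
    -- Stage 1 update of `C_2`, with `E^{m+1/4} = (E^m + E^{(1)})/2`,
    -- `Φ^{m+1/4} = (Φ^m + Φ^{(1)})/2`
    (hStage1C2 : ∀ m : ℕ, ∀ j < Nx, ∀ φ : Polynomial ℝ, φ.natDegree ≤ k →
      (2 / Δt) * ((cellInt X j fun x => (C1s 2 m j).eval x * φ.eval x)
          - cellInt X j fun x => (C 2 m j).eval x * φ.eval x)
        + dgA vth NH Nx X (fun p i => C p m i) 2 j φ
        + dgB vth β NH Nx X (fun p i => C p m i)
            (fun i => (2⁻¹ : ℝ) • (E m i + E1 m i))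
            (fun i => (2⁻¹ : ℝ) • (Φ m i + Φ1 m i)) 2 j φ = 0)
    -- Stage 2 (full step): for every mode `n ≠ 2`
    (hStage2 : ∀ m : ℕ, ∀ n < NH, n ≠ 2 → ∀ j < Nx,
      ∀ φ : Polynomial ℝ, φ.natDegree ≤ k →
      (1 / Δt) * ((cellInt X j fun x => (C n (m + 1) j).eval x * φ.eval x)
          - cellInt X j fun x => (C n m j).eval x * φ.eval x)
        + dgA vth NH Nx X (fun p i => C1s p m i) n j φ
        + dgB vth β NH Nx X (fun p i => C1s p m i) (E1 m) (Φ1 m) n j φ = 0)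
    -- the DG Poisson solver at every time step, with source `C_0^m`
    (hPoisson : ∀ m : ℕ, dgPoisson vth ρ0 β k Nx X (C 0 m) (E m) (Φ m))
    -- Stage 2 update of `C_2`, with `E^{m+1/2} = (E^m + E^{m+1})/2`,
    -- `Φ^{m+1/2} = (Φ^m + Φ^{m+1})/2`
    (hStage2C2 : ∀ m : ℕ, ∀ j < Nx, ∀ φ : Polynomial ℝ, φ.natDegree ≤ k →
      (1 / Δt) * ((cellInt X j fun x => (C 2 (m + 1) j).eval x * φ.eval x)
          - cellInt X j fun x => (C 2 m j).eval x * φ.eval x)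
        + dgA vth NH Nx X (fun p i => C1s p m i) 2 j φ
        + dgB vth β NH Nx X (fun p i => C1s p m i)
            (fun i => (2⁻¹ : ℝ) • (E m i + E (m + 1) i))
            (fun i => (2⁻¹ : ℝ) • (Φ m i + Φ (m + 1) i)) 2 j φ = 0) :
    ∀ m : ℕ,
      dgTotInt Nx X (C 0 m) = dgTotInt Nx X (C 0 0)
      ∧ dgTotInt Nx X (C 1 m) = dgTotInt Nx X (C 1 0)
      ∧ dgEnergy vth β Nx X (fun p i => C p m i) (E m) (Φ m)
          = dgEnergy vth β Nx X (fun p i => C p 0 i) (E 0) (Φ 0) :=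
  dg_rk2_conservation_general vth ρ0 β Δt k Nx NH hvth hΔt hNx hNH X C C1s E Φ E1 Φ1 hdegC1s hdegE
    hdegΦ hdegE1 hPoisson1 hStage2 hPoisson hStage2C2
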